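/- arXiv:2402.17294 — 2 statements merged into one kernel-verified Lean document; each statement's English description precedes it below -/
import Mathlib

section
/- Let X₁, X₂ have densities f₁, f₂ of T2GWG form with common β, H, h and parameters α₁ < α₂ respectively. Then the likelihood ratio f₁(x)/f₂(x) = (α₁/α₂) exp((α₂ - α₁)(H(x)/(1-H(x)))^(-β)), and this ratio is strictly decreasing in x on any interval where H is differentiable, strictly increasing, and takes values in (0,1). -/
theorem t2gwg_likelihood_ratio_ordering (α₁ α₂ β : ℝ) (hβ : 0 < β)
    (hα₁ : 0 < α₁) (hα : α₁ < α₂) (H h : ℝ → ℝ) (s : Set ℝ)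
    (hderiv : ∀ x ∈ s, HasDerivAt H (h x) x) (hpos : ∀ x ∈ s, 0 < h x)
    (hmono : StrictMonoOn H s) (hval : ∀ x ∈ s, 0 < H x ∧ H x < 1) :
    (∀ x ∈ s,
      (α₁ * β * h x * (H x) ^ (-β - 1) * (1 - H x) ^ (β - 1) *
          Real.exp (-α₁ * (H x / (1 - H x)) ^ (-β))) /
        (α₂ * β * h x * (H x) ^ (-β - 1) * (1 - H x) ^ (β - 1) *
          Real.exp (-α₂ * (H x / (1 - H x)) ^ (-β))) =
        (α₁ / α₂) * Real.exp ((α₂ - α₁) * (H x / (1 - H x)) ^ (-β))) ∧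
    StrictAntiOn (fun x =>
      (α₁ * β * h x * (H x) ^ (-β - 1) * (1 - H x) ^ (β - 1) *
          Real.exp (-α₁ * (H x / (1 - H x)) ^ (-β))) /
        (α₂ * β * h x * (H x) ^ (-β - 1) * (1 - H x) ^ (β - 1) *
          Real.exp (-α₂ * (H x / (1 - H x)) ^ (-β)))) s := by
  have hA₂ : (0:ℝ) < α₂ := hα₁.trans hα
  have key : ∀ x ∈ s,
      (α₁ * β * h x * (H x) ^ (-β - 1) * (1 - H x) ^ (β - 1) *
          Real.exp (-α₁ * (H x / (1 - H x)) ^ (-β))) /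
        (α₂ * β * h x * (H x) ^ (-β - 1) * (1 - H x) ^ (β - 1) *
          Real.exp (-α₂ * (H x / (1 - H x)) ^ (-β))) =
        (α₁ / α₂) * Real.exp ((α₂ - α₁) * (H x / (1 - H x)) ^ (-β)) := by
    intro x hx
    obtain ⟨h0, h1⟩ := hval x hx
    have hh := hpos x hx
    have hHne : (H x) ^ (-β - 1) ≠ 0 := (Real.rpow_pos_of_pos h0 _).ne'
    have h1H : (0:ℝ) < 1 - H x := by linarith
    have h1Hne : (1 - H x) ^ (β - 1) ≠ 0 := (Real.rpow_pos_of_pos h1H _).ne'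
    set t := (H x / (1 - H x)) ^ (-β) with ht
    have hexp : Real.exp (-α₁ * t) = Real.exp ((α₂ - α₁) * t) * Real.exp (-α₂ * t) := by
      rw [← Real.exp_add]; ring_nf
    rw [hexp]
    have he2 : Real.exp (-α₂ * t) ≠ 0 := (Real.exp_pos _).ne'
    field_simp
  refine ⟨key, ?_⟩
  intro x hx y hy hxy
  simp only [key x hx, key y hy]
  have hc : (0:ℝ) < α₁ / α₂ := div_pos hα₁ hA₂
  apply mul_lt_mul_of_pos_left _ hc
  apply Real.exp_lt_exp.mpr
  apply mul_lt_mul_of_pos_left _ (by linarith : (0:ℝ) < α₂ - α₁)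
  obtain ⟨hx0, hx1⟩ := hval x hx
  obtain ⟨hy0, hy1⟩ := hval y hy
  have hxy' : H x < H y := hmono hx hy hxy
  have hqx : 0 < H x / (1 - H x) := div_pos hx0 (by linarith)
  have hlt : H x / (1 - H x) < H y / (1 - H y) := by
    rw [div_lt_div_iff₀ (by linarith) (by linarith)]
    nlinarith
  exact Real.rpow_lt_rpow_of_neg hqx hlt (by linarith)
end

section
/- For the Type-2 Gumbel Weibull-Uniform distribution with cdf F(x) = exp(-α (x/(γ-x))^(-β)) on (0, γ), with α, β, γ > 0, the quantile at level p ∈ (0,1) is x_p = γ / (1 + ((-log p)/α)^(1/β)), i.e., F(x_p) = p. -/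
theorem t2gwu_quantile (α β γ : ℝ) (hα : 0 < α) (hβ : 0 < β) (hγ : 0 < γ)
    (p : ℝ) (hp : p ∈ Set.Ioo (0 : ℝ) 1) :
    Real.exp (-α * ((γ / (1 + ((-Real.log p) / α) ^ (1 / β))) /
      (γ - γ / (1 + ((-Real.log p) / α) ^ (1 / β)))) ^ (-β)) = p := by
  obtain ⟨hp0, hp1⟩ := hp
  have hL : 0 < -Real.log p := by
    have := Real.log_neg hp0 hp1
    linarith
  set L := -Real.log p with hLdef
  have hLa : 0 < L / α := div_pos hL hα
  set t := (L / α) ^ (1 / β) with htdef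
  have ht : 0 < t := Real.rpow_pos_of_pos hLa _
  have h1t : 0 < 1 + t := by linarith
  have hx : γ - γ / (1 + t) = γ * t / (1 + t) := by
    field_simp
    ring
  have hratio : (γ / (1 + t)) / (γ - γ / (1 + t)) = t⁻¹ := by
    rw [hx]
    field_simp
  rw [hratio]
  have h2 : (t⁻¹ : ℝ) ^ (-β) = t ^ β := by
    rw [← Real.rpow_neg_one t, ← Real.rpow_mul ht.le]
    norm_num
  rw [h2, htdef, ← Real.rpow_mul hLa.le]
  rw [one_div, inv_mul_cancel₀ (ne_of_gt hβ), Real.rpow_one]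
  rw [← Real.exp_log hp0]
  congr 1
  rw [hLdef]
  field_simp
end
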